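/- Let ħ > 0, q, m real with m > 0, a₀ > 0 a constant, ε ∈ {−1, 0, 1}, and suppose the nowhere-vanishing smooth function Ω satisfies the equation −(ħ²/2) □_g ln|Ω²/a| + (ħ²/4) g^{μν} ∂_μ ln|Ω²/a| ∂_ν ln|Ω²/a| − Ω⁻² [ ε m² + q²/(β² a²) ] = −m² on ℝ⁴. Let ψ : ℝ⁴ → ℂ be smooth and set ψ̄ := m |Ω² a₀/a|^{1/2} ψ. Then ψ̄ satisfies |det g|^{−1/2} (ħ∂_μ − iqA_μ − (ħ/2)u_μ)[ |det g|^{1/2} g^{μν} (ħ∂_ν − iqA_ν − (ħ/2)u_ν) ψ̄ ] = { −(ħ²/2) □_g ln|Ω²/a| + (ħ²/4) g^{μν} u_μ u_ν − ε m² Ω⁻² − Ω⁻² q²/(β² a²) } ψ̄, where u_μ = ∂_μ ln|Ω²/a|, if and only if ψ satisfies the 4-dimensional Klein–Gordon equation with respect to g: |det g|^{−1/2} (ħ∂_μ − iqA_μ)[ |det g|^{1/2} g^{μν} (ħ∂_ν − iqA_ν) ψ ] + m² ψ = 0. -/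

import Mathlib

/-!
With `w = ln|Ω²/a|`, the factor `c = m √a₀ e^{w/2}` equals `m |Ω² a₀ / a|^{1/2}` and satisfies
`ħ ∂c = (ħ/2) (∂w) c`. Multiplying by `c` therefore intertwines `ħ∂ − iqA` with
`ħ∂ − iqA − (ħ/2)∂w`, so the `u`-modified operator applied to `cψ` is `c` times the
Klein–Gordon operator applied to `ψ`. The conformal-factor equation says exactly that the
potential on the right-hand side is `−m²`, and since `c` never vanishes the two equations are
equivalent.
-/

open scoped BigOperators

/-- Partial derivative in the μ-th coordinate direction. -/
noncomputable def pd {ι : Type*} [Fintype ι] [DecidableEq ι] {F : Type*}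
    [NormedAddCommGroup F] [NormedSpace ℝ F]
    (f : (ι → ℝ) → F) (μ : ι) (x : ι → ℝ) : F :=
  fderiv ℝ f x (Pi.single μ 1)

/-- Coordinate d'Alembertian: □_h f = |det h|^{−1/2} ∂_M( |det h|^{1/2} h^{MN} ∂_N f ). -/
noncomputable def box {ι : Type*} [Fintype ι] [DecidableEq ι] {F : Type*}
    [NormedAddCommGroup F] [NormedSpace ℝ F]
    (h : (ι → ℝ) → Matrix ι ι ℝ) (f : (ι → ℝ) → F) (x : ι → ℝ) : F :=
  (Real.sqrt |(h x).det|)⁻¹ •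
    ∑ μ : ι, pd (fun z => ∑ ν : ι, (Real.sqrt |(h z).det| * (h z)⁻¹ μ ν) • pd f ν z) μ x

/-- The function ln|Ω²/a|. -/
noncomputable def lnOa (Ω a : (Fin 4 → ℝ) → ℝ) (z : Fin 4 → ℝ) : ℝ :=
  Real.log |(Ω z)^2 / a z|

/-- The flux |det g|^{1/2} g^{μν} (hb∂_ν − iqA_ν − (hb/2)∂_ν w) ψ. -/
noncomputable def KGfluxU (g : (Fin 4 → ℝ) → Matrix (Fin 4) (Fin 4) ℝ)
    (A : (Fin 4 → ℝ) → Fin 4 → ℝ) (hb q : ℝ) (w : (Fin 4 → ℝ) → ℝ)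
    (ψ : (Fin 4 → ℝ) → ℂ) (μ : Fin 4) (z : Fin 4 → ℝ) : ℂ :=
  (Real.sqrt |(g z).det| : ℂ) * ∑ ν : Fin 4, ((g z)⁻¹ μ ν : ℂ) *
    ((hb : ℂ) * pd ψ ν z - Complex.I * (q : ℂ) * (A z ν : ℂ) * ψ z
      - ((hb/2 : ℝ) : ℂ) * ((pd w ν z : ℝ) : ℂ) * ψ z)

/-- The operator |det g|^{−1/2} (hb∂_μ − iqA_μ − (hb/2)∂_μ w)[ |det g|^{1/2} g^{μν}
(hb∂_ν − iqA_ν − (hb/2)∂_ν w) ψ ]. -/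
noncomputable def KGopU (g : (Fin 4 → ℝ) → Matrix (Fin 4) (Fin 4) ℝ)
    (A : (Fin 4 → ℝ) → Fin 4 → ℝ) (hb q : ℝ) (w : (Fin 4 → ℝ) → ℝ)
    (ψ : (Fin 4 → ℝ) → ℂ) (x : Fin 4 → ℝ) : ℂ :=
  ((Real.sqrt |(g x).det| : ℝ) : ℂ)⁻¹ *
    ∑ μ : Fin 4, ((hb : ℂ) * pd (fun z => KGfluxU g A hb q w ψ μ z) μ x
      - Complex.I * (q : ℂ) * (A x μ : ℂ) * KGfluxU g A hb q w ψ μ x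
      - ((hb/2 : ℝ) : ℂ) * ((pd w μ x : ℝ) : ℂ) * KGfluxU g A hb q w ψ μ x)

/-- The minimally-coupled Klein–Gordon operator
|det g|^{−1/2} (hb∂_μ − iqA_μ)[ |det g|^{1/2} g^{μν} (hb∂_ν − iqA_ν) ψ ]. -/
noncomputable def KGop (g : (Fin 4 → ℝ) → Matrix (Fin 4) (Fin 4) ℝ)
    (A : (Fin 4 → ℝ) → Fin 4 → ℝ) (hb q : ℝ)
    (ψ : (Fin 4 → ℝ) → ℂ) (x : Fin 4 → ℝ) : ℂ :=
  ((Real.sqrt |(g x).det| : ℝ) : ℂ)⁻¹ *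
    ∑ μ : Fin 4, ((hb : ℂ) * pd (fun z => (Real.sqrt |(g z).det| : ℂ) *
        ∑ ν : Fin 4, ((g z)⁻¹ μ ν : ℂ) *
          ((hb : ℂ) * pd ψ ν z - Complex.I * (q : ℂ) * (A z ν : ℂ) * ψ z)) μ x
      - Complex.I * (q : ℂ) * (A x μ : ℂ) * ((Real.sqrt |(g x).det| : ℂ) *
        ∑ ν : Fin 4, ((g x)⁻¹ μ ν : ℂ) *
          ((hb : ℂ) * pd ψ ν x - Complex.I * (q : ℂ) * (A x ν : ℂ) * ψ x)))

section MatrixSmoothness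

variable {E ι : Type*} [NormedAddCommGroup E] [NormedSpace ℝ E] [Fintype ι] [DecidableEq ι]
  {n : WithTop ℕ∞} {M : E → Matrix ι ι ℝ}

theorem contDiff_matrix_det (hM : ∀ i j, ContDiff ℝ n fun z => M z i j) :
    ContDiff ℝ n fun z => (M z).det := by
  simp only [Matrix.det_apply, Units.smul_def, zsmul_eq_mul]
  exact ContDiff.sum fun σ _ => contDiff_const.mul (contDiff_prod fun i _ => hM _ _)

theorem contDiff_matrix_inv_apply (hM : ∀ i j, ContDiff ℝ n fun z => M z i j)
    (hdet : ∀ z, (M z).det ≠ 0) (i j : ι) :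
    ContDiff ℝ n fun z => (M z)⁻¹ i j := by
  have hadj : ContDiff ℝ n fun z => (M z).adjugate i j := by
    simp only [Matrix.adjugate_apply]
    refine contDiff_matrix_det fun k l => ?_
    by_cases h : k = j <;> simp [Matrix.updateRow_apply, h] <;>
      first | exact contDiff_const | exact hM _ _
  have hinv : ∀ z, (M z)⁻¹ i j = ((M z).det)⁻¹ * (M z).adjugate i j := by
    intro z
    simp [Matrix.inv_def, Ring.inverse_eq_inv']
  simp only [hinv]
  exact ((contDiff_matrix_det hM).inv hdet).mul hadj

end MatrixSmoothness

theorem DifferentiableAt.ofReal_comp {E : Type*} [NormedAddCommGroup E] [NormedSpace ℝ E]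
    {f : E → ℝ} {x : E} (hf : DifferentiableAt ℝ f x) :
    DifferentiableAt ℝ (fun z => (f z : ℂ)) x :=
  Complex.ofRealCLM.differentiableAt.comp x hf

section PartialDerivatives

variable {ι : Type*} [Fintype ι] [DecidableEq ι] {x : ι → ℝ}

theorem pd_mul {𝔸 : Type*} [NormedCommRing 𝔸] [NormedAlgebra ℝ 𝔸] {f g : (ι → ℝ) → 𝔸}
    (μ : ι) (hf : DifferentiableAt ℝ f x) (hg : DifferentiableAt ℝ g x) :
    pd (fun z => f z * g z) μ x = pd f μ x * g x + f x * pd g μ x := by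
  simp only [pd, fderiv_fun_mul hf hg, add_apply, smul_apply, smul_eq_mul]
  ring

theorem pd_ofReal {f : (ι → ℝ) → ℝ} (μ : ι) (hf : DifferentiableAt ℝ f x) :
    pd (fun z => (f z : ℂ)) μ x = ((pd f μ x : ℝ) : ℂ) := by
  rw [pd, show (fun z => (f z : ℂ)) = Complex.ofRealCLM ∘ f from rfl,
    (Complex.ofRealCLM.hasFDerivAt.comp x hf.hasFDerivAt).fderiv]
  rfl

theorem pd_const_mul_exp_half {w : (ι → ℝ) → ℝ} (C : ℝ) (μ : ι)
    (hw : DifferentiableAt ℝ w x) :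
    pd (fun z => C * Real.exp (w z / 2)) μ x = C * Real.exp (w x / 2) / 2 * pd w μ x := by
  have h := ((hw.hasFDerivAt.mul_const (2 : ℝ)⁻¹).exp).const_mul C
  simp only [← div_eq_mul_inv] at h
  rw [pd, h.fderiv]
  simp only [smul_apply, smul_eq_mul, pd]
  ring

end PartialDerivatives

theorem sqrt_abs_eq_exp_half_log_abs {y : ℝ} (hy : y ≠ 0) :
    Real.sqrt |y| = Real.exp (Real.log |y| / 2) := by
  rw [Real.exp_half, Real.exp_log (abs_pos.2 hy)]

theorem sqrt_abs_mul_div_eq_exp_half_lnOa {Ω a : (Fin 4 → ℝ) → ℝ} {a₀ : ℝ} {z : Fin 4 → ℝ}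
    (hΩ : Ω z ≠ 0) (ha : a z ≠ 0) (ha₀ : 0 ≤ a₀) :
    Real.sqrt |(Ω z)^2 * a₀ / a z| = Real.sqrt a₀ * Real.exp (lnOa Ω a z / 2) := by
  rw [lnOa, ← sqrt_abs_eq_exp_half_log_abs (div_ne_zero (pow_ne_zero 2 hΩ) ha),
    mul_div_right_comm, abs_mul, abs_of_nonneg ha₀, mul_comm _ a₀, Real.sqrt_mul ha₀]

theorem contDiff_lnOa {Ω a : (Fin 4 → ℝ) → ℝ} {n : WithTop ℕ∞} (hΩ : ContDiff ℝ n Ω)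
    (ha : ContDiff ℝ n a) (hΩ0 : ∀ z, Ω z ≠ 0) (ha0 : ∀ z, a z ≠ 0) :
    ContDiff ℝ n (lnOa Ω a) := by
  have h : lnOa Ω a = fun z => Real.log ((Ω z)^2 / a z) := by
    funext z; rw [lnOa, Real.log_abs]
  rw [h]
  exact ((hΩ.pow 2).div ha ha0).log fun z => div_ne_zero (pow_ne_zero 2 (hΩ0 z)) (ha0 z)

section KleinGordon

variable (g : (Fin 4 → ℝ) → Matrix (Fin 4) (Fin 4) ℝ) (A : (Fin 4 → ℝ) → Fin 4 → ℝ)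
  (hb q : ℝ) (ψ : (Fin 4 → ℝ) → ℂ)

noncomputable def kgFlux (μ : Fin 4) (z : Fin 4 → ℝ) : ℂ :=
  (Real.sqrt |(g z).det| : ℂ) * ∑ ν : Fin 4, ((g z)⁻¹ μ ν : ℂ) *
    ((hb : ℂ) * pd ψ ν z - Complex.I * (q : ℂ) * (A z ν : ℂ) * ψ z)

theorem KGop_eq_kgFlux (x : Fin 4 → ℝ) :
    KGop g A hb q ψ x = ((Real.sqrt |(g x).det| : ℝ) : ℂ)⁻¹ *
      ∑ μ : Fin 4, ((hb : ℂ) * pd (kgFlux g A hb q ψ μ) μ x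
        - Complex.I * (q : ℂ) * (A x μ : ℂ) * kgFlux g A hb q ψ μ x) :=
  rfl

variable {g A hb q ψ}

theorem differentiable_kgFlux (hg : ∀ μ ν, ContDiff ℝ 1 fun z => g z μ ν)
    (hdet : ∀ z, (g z).det ≠ 0) (hA : ∀ ν, Differentiable ℝ fun z => A z ν)
    (hψ : ContDiff ℝ 2 ψ) (μ : Fin 4) :
    Differentiable ℝ (kgFlux g A hb q ψ μ) := by
  have hofReal {f : (Fin 4 → ℝ) → ℝ} (hf : Differentiable ℝ f) :
      Differentiable ℝ fun z => (f z : ℂ) :=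
    fun z => (hf z).ofReal_comp
  have hsqrt : Differentiable ℝ fun z => Real.sqrt |(g z).det| :=
    (((contDiff_matrix_det hg).abs hdet).sqrt fun z => (abs_pos.2 (hdet z)).ne').differentiable
      one_ne_zero
  have hinv (ν : Fin 4) : Differentiable ℝ fun z => (g z)⁻¹ μ ν :=
    (contDiff_matrix_inv_apply hg hdet μ ν).differentiable one_ne_zero
  have hpdψ (ν : Fin 4) : Differentiable ℝ (pd ψ ν) :=
    ((hψ.fderiv_right (m := 1) (by norm_num)).clm_apply contDiff_const).differentiable one_ne_zero
  have hψ1 : Differentiable ℝ ψ := hψ.differentiable (by norm_num)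
  unfold kgFlux
  refine (hofReal hsqrt).mul (Differentiable.fun_sum fun ν _ => ?_)
  exact (hofReal (hinv ν)).mul
    (((hpdψ ν).const_mul _).sub (((hofReal (hA ν)).const_mul _).mul hψ1))

variable {c w : (Fin 4 → ℝ) → ℝ}

theorem KGfluxU_mul_eq (hc : Differentiable ℝ c) (hψ : Differentiable ℝ ψ)
    (hcw : ∀ ν z, pd c ν z = c z / 2 * pd w ν z) (μ : Fin 4) (z : Fin 4 → ℝ) :
    KGfluxU g A hb q w (fun z => (c z : ℂ) * ψ z) μ z = c z * kgFlux g A hb q ψ μ z := by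
  have hterm (ν : Fin 4) :
      (hb : ℂ) * pd (fun z => (c z : ℂ) * ψ z) ν z
          - Complex.I * q * A z ν * ((c z : ℂ) * ψ z)
          - ((hb / 2 : ℝ) : ℂ) * ((pd w ν z : ℝ) : ℂ) * ((c z : ℂ) * ψ z)
        = c z * ((hb : ℂ) * pd ψ ν z - Complex.I * q * A z ν * ψ z) := by
    rw [pd_mul ν (hc z).ofReal_comp (hψ z), pd_ofReal ν (hc z), hcw]
    push_cast
    ring
  simp only [KGfluxU, kgFlux, hterm, Finset.mul_sum]
  exact Finset.sum_congr rfl fun ν _ => by ring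

theorem KGopU_mul_eq (hc : Differentiable ℝ c) (hψ : Differentiable ℝ ψ)
    (hcw : ∀ ν z, pd c ν z = c z / 2 * pd w ν z) (x : Fin 4 → ℝ)
    (hF : ∀ μ, DifferentiableAt ℝ (kgFlux g A hb q ψ μ) x) :
    KGopU g A hb q w (fun z => (c z : ℂ) * ψ z) x = c x * KGop g A hb q ψ x := by
  have hterm (μ : Fin 4) :
      (hb : ℂ) * pd (fun z => (c z : ℂ) * kgFlux g A hb q ψ μ z) μ x
          - Complex.I * q * A x μ * (c x * kgFlux g A hb q ψ μ x)
          - ((hb / 2 : ℝ) : ℂ) * ((pd w μ x : ℝ) : ℂ) * (c x * kgFlux g A hb q ψ μ x)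
        = c x * ((hb : ℂ) * pd (kgFlux g A hb q ψ μ) μ x
          - Complex.I * q * A x μ * kgFlux g A hb q ψ μ x) := by
    rw [pd_mul μ (hc x).ofReal_comp (hF μ), pd_ofReal μ (hc x), hcw]
    push_cast
    ring
  simp only [KGopU, KGfluxU_mul_eq hc hψ hcw, hterm, KGop_eq_kgFlux, ← Finset.mul_sum]
  ring

end KleinGordon

theorem conformal_rescaling_klein_gordon_general
    (g : (Fin 4 → ℝ) → Matrix (Fin 4) (Fin 4) ℝ)
    (A : (Fin 4 → ℝ) → Fin 4 → ℝ) (a Ω : (Fin 4 → ℝ) → ℝ) (β : ℝ)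
    (hg : ∀ μ ν, ContDiff ℝ (⊤ : ℕ∞) (fun x => g x μ ν))
    (hginv : ∀ x, IsUnit (g x).det)
    (hA : ∀ μ, ContDiff ℝ (⊤ : ℕ∞) (fun x => A x μ))
    (ha : ContDiff ℝ (⊤ : ℕ∞) a) (hapos : ∀ x, 0 < a x)
    (hΩ : ContDiff ℝ (⊤ : ℕ∞) Ω) (hΩ0 : ∀ x, Ω x ≠ 0)
    (hb q m a₀ ε : ℝ) (hm : 0 < m) (ha₀ : 0 < a₀)
    -- Ω satisfies the conformal-factor equation
    (hΩeq : ∀ x : Fin 4 → ℝ,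
      -(hb^2/2) * box g (lnOa Ω a) x
        + (hb^2/4) * ∑ μ : Fin 4, ∑ ν : Fin 4, (g x)⁻¹ μ ν
            * pd (lnOa Ω a) μ x * pd (lnOa Ω a) ν x
        - ((Ω x)^2)⁻¹ * (ε * m^2 + q^2 / (β^2 * (a x)^2)) = -(m^2))
    (ψ : (Fin 4 → ℝ) → ℂ) (hψ : ContDiff ℝ (⊤ : ℕ∞) ψ) :
    (∀ x : Fin 4 → ℝ,
      KGopU g A hb q (lnOa Ω a)
          (fun z => ((m * Real.sqrt |(Ω z)^2 * a₀ / a z| : ℝ) : ℂ) * ψ z) x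
        = ((-(hb^2/2) * box g (lnOa Ω a) x
            + (hb^2/4) * ∑ μ : Fin 4, ∑ ν : Fin 4, (g x)⁻¹ μ ν
                * pd (lnOa Ω a) μ x * pd (lnOa Ω a) ν x
            - ε * m^2 * ((Ω x)^2)⁻¹
            - ((Ω x)^2)⁻¹ * q^2 / (β^2 * (a x)^2) : ℝ) : ℂ)
            * (((m * Real.sqrt |(Ω x)^2 * a₀ / a x| : ℝ) : ℂ) * ψ x)) ↔
    (∀ x : Fin 4 → ℝ, KGop g A hb q ψ x + ((m : ℂ))^2 * ψ x = 0) := by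
  have ha0 (z : Fin 4 → ℝ) : a z ≠ 0 := (hapos z).ne'
  have hw : Differentiable ℝ (lnOa Ω a) :=
    (contDiff_lnOa hΩ ha hΩ0 ha0).differentiable (by simp)
  have hc_eq (z : Fin 4 → ℝ) : m * Real.sqrt |(Ω z)^2 * a₀ / a z|
      = m * Real.sqrt a₀ * Real.exp (lnOa Ω a z / 2) := by
    rw [sqrt_abs_mul_div_eq_exp_half_lnOa (hΩ0 z) (ha0 z) ha₀.le, mul_assoc]
  have hc0 (z : Fin 4 → ℝ) : ((m * Real.sqrt a₀ * Real.exp (lnOa Ω a z / 2) : ℝ) : ℂ) ≠ 0 := by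
    have := Real.sqrt_pos.2 ha₀
    exact Complex.ofReal_ne_zero.2 (by positivity)
  have hrescale (x : Fin 4 → ℝ) :
      KGopU g A hb q (lnOa Ω a)
          (fun z => ((m * Real.sqrt a₀ * Real.exp (lnOa Ω a z / 2) : ℝ) : ℂ) * ψ z) x
        = (m * Real.sqrt a₀ * Real.exp (lnOa Ω a x / 2) : ℝ) * KGop g A hb q ψ x :=
    KGopU_mul_eq (by fun_prop) (hψ.differentiable (by simp))
      (fun ν z => pd_const_mul_exp_half _ ν (hw z)) x fun μ =>
      differentiable_kgFlux (fun μ ν => (hg μ ν).of_le (WithTop.coe_le_coe.2 le_top)) (fun z => (hginv z).ne_zero)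
        (fun ν => (hA ν).differentiable (by simp)) (hψ.of_le (WithTop.coe_le_coe.2 le_top)) μ x
  have hpotential (x : Fin 4 → ℝ) :
      -(hb^2/2) * box g (lnOa Ω a) x
        + (hb^2/4) * ∑ μ : Fin 4, ∑ ν : Fin 4, (g x)⁻¹ μ ν
            * pd (lnOa Ω a) μ x * pd (lnOa Ω a) ν x
        - ε * m^2 * ((Ω x)^2)⁻¹ - ((Ω x)^2)⁻¹ * q^2 / (β^2 * (a x)^2) = -m^2 := by
    linear_combination hΩeq x
  simp only [hc_eq, hrescale, hpotential]
  refine forall_congr' fun x => ?_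
  have hcx := hc0 x
  generalize ((m * Real.sqrt a₀ * Real.exp (lnOa Ω a x / 2) : ℝ) : ℂ) = c at hcx ⊢
  push_cast
  exact ⟨fun h => mul_left_cancel₀ hcx (by linear_combination h),
    fun h => by linear_combination c * h⟩

/-- given that Ω solves the conformal-factor equation, ψ̄ = m|Ω²a₀/a|^{1/2}ψ
solves the u-modified equation iff ψ solves the 4-dimensional Klein–Gordon equation. -/
theorem conformal_rescaling_klein_gordon
    (g : (Fin 4 → ℝ) → Matrix (Fin 4) (Fin 4) ℝ)
    (A : (Fin 4 → ℝ) → Fin 4 → ℝ) (a Ω : (Fin 4 → ℝ) → ℝ) (β : ℝ)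
    (hg : ∀ μ ν, ContDiff ℝ (⊤ : ℕ∞) (fun x => g x μ ν))
    (hgsymm : ∀ x, (g x).IsSymm)
    (hginv : ∀ x, IsUnit (g x).det)
    (hA : ∀ μ, ContDiff ℝ (⊤ : ℕ∞) (fun x => A x μ))
    (ha : ContDiff ℝ (⊤ : ℕ∞) a) (hapos : ∀ x, 0 < a x)
    (hΩ : ContDiff ℝ (⊤ : ℕ∞) Ω) (hΩ0 : ∀ x, Ω x ≠ 0)
    (hβ : β ≠ 0)
    (hb q m a₀ ε : ℝ) (hhb : 0 < hb) (hm : 0 < m) (ha₀ : 0 < a₀)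
    (hε : ε = -1 ∨ ε = 0 ∨ ε = 1)
    -- Ω satisfies the conformal-factor equation
    (hΩeq : ∀ x : Fin 4 → ℝ,
      -(hb^2/2) * box g (lnOa Ω a) x
        + (hb^2/4) * ∑ μ : Fin 4, ∑ ν : Fin 4, (g x)⁻¹ μ ν
            * pd (lnOa Ω a) μ x * pd (lnOa Ω a) ν x
        - ((Ω x)^2)⁻¹ * (ε * m^2 + q^2 / (β^2 * (a x)^2)) = -(m^2))
    (ψ : (Fin 4 → ℝ) → ℂ) (hψ : ContDiff ℝ (⊤ : ℕ∞) ψ) :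
    (∀ x : Fin 4 → ℝ,
      KGopU g A hb q (lnOa Ω a)
          (fun z => ((m * Real.sqrt |(Ω z)^2 * a₀ / a z| : ℝ) : ℂ) * ψ z) x
        = ((-(hb^2/2) * box g (lnOa Ω a) x
            + (hb^2/4) * ∑ μ : Fin 4, ∑ ν : Fin 4, (g x)⁻¹ μ ν
                * pd (lnOa Ω a) μ x * pd (lnOa Ω a) ν x
            - ε * m^2 * ((Ω x)^2)⁻¹
            - ((Ω x)^2)⁻¹ * q^2 / (β^2 * (a x)^2) : ℝ) : ℂ)
            * (((m * Real.sqrt |(Ω x)^2 * a₀ / a x| : ℝ) : ℂ) * ψ x)) ↔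
    (∀ x : Fin 4 → ℝ, KGop g A hb q ψ x + ((m : ℂ))^2 * ψ x = 0) :=
  conformal_rescaling_klein_gordon_general g A a Ω β hg hginv hA ha hapos hΩ hΩ0 hb q m a₀ ε hm ha₀
    hΩeq ψ hψ
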